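/- arXiv:math/0205081 — 6 statements merged into one kernel-verified Lean document; each statement's English description precedes it below -/
import Mathlib

section
/- Let V be a finite-dimensional real vector space with a nondegenerate symmetric bilinear form, J a pseudo-Hermitian almost complex structure on V, and R an algebraic curvature tensor on V. Then R is almost complex (i.e. J∘R(x,Jx) = R(x,Jx)∘J for every x ∈ V such that span{x,Jx} is a nondegenerate complex line) if and only if J*R = R, i.e. R(Jx,Jy,Jz,Jw) = R(x,y,z,w) for all x,y,z,w ∈ V. -/
/-!
If `J*R = R`, then `R(x, Jx, Jz, w) = -R(x, Jx, z, Jw)`, which, read through the nondegenerate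
form, says that `R(x, Jx)` commutes with `J`. Conversely, when `B x x ≠ 0` the plane
`span {x, Jx}` is a nondegenerate complex line, so `R(x, Jx)` commutes with the isometry `J` and
`R(x, Jx, Jz, Jw) = R(x, Jx, z, w)`. Both sides are quadratic in `x` and the non-null vectors are
Zariski dense, so this holds for every `x`; polarizing in `x` and using pair symmetry gives
`J*R = R`.
-/

open Module

variable {V : Type*} [AddCommGroup V] [Module ℝ V] [FiniteDimensional ℝ V]

/-- `R` is an algebraic curvature tensor: multilinear in each slot and satisfying the
usual curvature symmetries. -/
def IsAlgCurvTensor (R : V → V → V → V → ℝ) : Prop :=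
  (∀ (a : ℝ) (x x' y z w : V), R (a • x + x') y z w = a * R x y z w + R x' y z w) ∧
  (∀ (a : ℝ) (x y y' z w : V), R x (a • y + y') z w = a * R x y z w + R x y' z w) ∧
  (∀ (a : ℝ) (x y z z' w : V), R x y (a • z + z') w = a * R x y z w + R x y z' w) ∧
  (∀ (a : ℝ) (x y z w w' : V), R x y z (a • w + w') = a * R x y z w + R x y z w') ∧
  (∀ x y z w : V, R x y z w = - R y x z w) ∧
  (∀ x y z w : V, R x y z w = R z w x y) ∧
  (∀ x y z w : V, R x y z w + R y z x w + R z x y w = 0)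

/-- `J` is a pseudo-Hermitian almost complex structure on `(V, B)`. -/
def IsPseudoHermitian (B : LinearMap.BilinForm ℝ V) (J : V →ₗ[ℝ] V) : Prop :=
  (∀ x : V, J (J x) = -x) ∧ (∀ x y : V, B (J x) (J y) = B x y)

/-- `π` is a nondegenerate complex line: a `2`-dimensional `J`-invariant subspace
on which `B` is nondegenerate. -/
def IsNondegComplexLine (B : LinearMap.BilinForm ℝ V) (J : V →ₗ[ℝ] V)
    (π : Submodule ℝ V) : Prop :=
  finrank ℝ π = 2 ∧ (∀ v ∈ π, J v ∈ π) ∧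
  (∀ v ∈ π, (∀ w ∈ π, B v w = 0) → v = 0)

/-- `R` is almost complex: for every `x` such that `span {x, Jx}` is a nondegenerate
complex line, the curvature operator `R(x, Jx)` (defined by
`B (A z) w = R x (Jx) z w`) commutes with `J`. -/
def IsAlmostComplex (B : LinearMap.BilinForm ℝ V) (J : V →ₗ[ℝ] V)
    (R : V → V → V → V → ℝ) : Prop :=
  ∀ x : V, IsNondegComplexLine B J (Submodule.span ℝ {x, J x}) →
    ∀ A : V →ₗ[ℝ] V, (∀ z w : V, B (A z) w = R x (J x) z w) →
      ∀ v : V, J (A v) = A (J v)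

open Polynomial

theorem isLinearMap_of_map_smul_add {K M N : Type*} [Semiring K] [AddCommGroup M] [Module K M]
    [AddCommGroup N] [Module K N] {f : M → N}
    (h : ∀ (a : K) (x y : M), f (a • x + y) = a • f x + f y) : IsLinearMap K f := by
  have hf0 : f 0 = 0 := by simpa using h 1 0 0
  exact ⟨fun x y => by simpa using h 1 x y, fun a x => by simpa [hf0] using h a x 0⟩

namespace LinearMap.BilinForm

variable {K M : Type*} [CommRing K] [AddCommGroup M] [Module K M]

theorem exists_poly_eval_eq_apply_add_smul (Φ : LinearMap.BilinForm K M) (x v : M) :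
    ∃ p : K[X], p.coeff 2 = Φ v v ∧ ∀ t, p.eval t = Φ (x + t • v) (x + t • v) :=
  ⟨C (Φ v v) * X ^ 2 + C (Φ x v + Φ v x) * X + C (Φ x x), by simp,
    fun t => by simp; ring⟩

/-- Along a line through an anisotropic vector `v` of `Ψ`, the `Ψ`-isotropic vectors are the roots
of a nonzero quadratic polynomial, so the diagonal of `Φ`, a quadratic polynomial vanishing at all
other points of the line, vanishes identically. -/
theorem isAlt_of_apply_self_eq_zero_of_ne_zero [IsDomain K] [Infinite K]
    {Φ Ψ : LinearMap.BilinForm K M} {v : M} (hv : Ψ v v ≠ 0)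
    (h : ∀ y, Ψ y y ≠ 0 → Φ y y = 0) : Φ.IsAlt := by
  intro x
  obtain ⟨p, -, hp⟩ := Φ.exists_poly_eval_eq_apply_add_smul x v
  obtain ⟨q, hq2, hq⟩ := Ψ.exists_poly_eval_eq_apply_add_smul x v
  have hq0 : q ≠ 0 := fun h0 => hv (by rw [← hq2, h0, coeff_zero])
  have hpq : p * q = 0 := Polynomial.funext fun t => by
    rw [eval_mul, eval_zero, hp, hq]
    by_cases ht : Ψ (x + t • v) (x + t • v) = 0
    · rw [ht, mul_zero]
    · rw [h _ ht, zero_mul]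
  have hp0 : p = 0 := (mul_eq_zero.1 hpq).resolve_right hq0
  simpa [hp0] using (hp 0).symm

end LinearMap.BilinForm

namespace IsAlgCurvTensor

variable {R : V → V → V → V → ℝ}

theorem isLinearMap_fst (hR : IsAlgCurvTensor R) (y z w : V) : IsLinearMap ℝ (R · y z w) :=
  isLinearMap_of_map_smul_add (hR.1 · · · y z w)

theorem isLinearMap_snd (hR : IsAlgCurvTensor R) (x z w : V) : IsLinearMap ℝ (R x · z w) :=
  isLinearMap_of_map_smul_add (hR.2.1 · x · · z w)

theorem antisymm (hR : IsAlgCurvTensor R) (x y z w : V) : R x y z w = -R y x z w :=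
  hR.2.2.2.2.1 x y z w

theorem swap_pairs (hR : IsAlgCurvTensor R) (x y z w : V) : R x y z w = R z w x y :=
  hR.2.2.2.2.2.1 x y z w

def bilin (hR : IsAlgCurvTensor R) (z w : V) : LinearMap.BilinForm ℝ V :=
  LinearMap.mk₂ ℝ (R · · z w) (fun x x' y => (hR.isLinearMap_fst y z w).map_add x x')
    (fun a x y => (hR.isLinearMap_fst y z w).map_smul a x)
    (fun x y y' => (hR.isLinearMap_snd x z w).map_add y y')
    (fun a x y => (hR.isLinearMap_snd x z w).map_smul a y)

@[simp]
theorem bilin_apply (hR : IsAlgCurvTensor R) (x y z w : V) : hR.bilin z w x y = R x y z w := rfl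

def jDefect (hR : IsAlgCurvTensor R) (J : V →ₗ[ℝ] V) (z w : V) : LinearMap.BilinForm ℝ V :=
  (hR.bilin (J z) (J w) - hR.bilin z w).compl₂ J

@[simp]
theorem jDefect_apply (hR : IsAlgCurvTensor R) (J : V →ₗ[ℝ] V) (z w u v : V) :
    hR.jDefect J z w u v = R u (J v) (J z) (J w) - R u (J v) z w := rfl

theorem map_neg_snd (hR : IsAlgCurvTensor R) (x y z w : V) : R x (-y) z w = -R x y z w := by
  simpa using (hR.bilin z w x).map_neg y

theorem map_neg_fourth (hR : IsAlgCurvTensor R) (x y z w : V) : R x y z (-w) = -R x y z w := by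
  rw [hR.swap_pairs, hR.map_neg_snd, hR.swap_pairs]

theorem exists_curvatureOperator {B : LinearMap.BilinForm ℝ V} (hB : B.SeparatingLeft)
    (hR : IsAlgCurvTensor R) (x y : V) : ∃ A : V →ₗ[ℝ] V, ∀ z w, B (A z) w = R x y z w :=
  ⟨(B.toDual (.ofSeparatingLeft hB)).symm.toLinearMap ∘ₗ hR.bilin x y, fun z w => by
    simp [hR.swap_pairs x y]⟩

theorem J_invariant_of_apply_J_J {J : V →ₗ[ℝ] V} (hR : IsAlgCurvTensor R)
    (hJ : ∀ x, J (J x) = -x) (h : ∀ x z w, R x (J x) (J z) (J w) = R x (J x) z w) :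
    ∀ x y z w, R (J x) (J y) (J z) (J w) = R x y z w := by
  have hdiff : ∀ x y z w, R (J x) (J y) (J z) (J w) - R x y z w =
      R (J x) (J y) z w - R x y (J z) (J w) := by
    intro x y z w
    have hAlt : (hR.jDefect J z w).IsAlt := fun u => by simp [h u z w]
    have := hAlt.neg_eq x (J y)
    simp only [jDefect_apply, hJ, hR.map_neg_snd] at this
    rw [hR.antisymm (J y), hR.antisymm (J y)] at this
    linarith
  intro x y z w
  have h₁ := hdiff x y z w
  have h₂ := hdiff z w x y
  rw [hR.swap_pairs (J z) (J w) x y, hR.swap_pairs z w x y, hR.swap_pairs (J z) (J w) (J x) (J y),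
    hR.swap_pairs z w (J x) (J y)] at h₂
  linarith

end IsAlgCurvTensor

namespace IsPseudoHermitian

variable {B : LinearMap.BilinForm ℝ V} {J : V →ₗ[ℝ] V}

theorem apply_J_left (hJ : IsPseudoHermitian B J) (x y : V) : B (J x) y = -B x (J y) := by
  rw [← hJ.2 (J x), hJ.1]
  simp

theorem apply_J_self (hJ : IsPseudoHermitian B J) (hB : B.IsSymm) (x : V) : B (J x) x = 0 := by
  have h := hJ.apply_J_left x x
  rw [hB.eq x (J x)] at h
  linarith

theorem eq_zero_of_orthogonal_pair (hJ : IsPseudoHermitian B J) (hB : B.IsSymm) {x : V}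
    (hx : B x x ≠ 0) {a b : ℝ} (h₁ : B (a • x + b • J x) x = 0)
    (h₂ : B (a • x + b • J x) (J x) = 0) : a = 0 ∧ b = 0 := by
  have hxJx : B x (J x) = 0 := by rw [hB.eq]; exact hJ.apply_J_self hB x
  simp only [map_add, map_smul, LinearMap.add_apply, LinearMap.smul_apply, smul_eq_mul,
    hJ.apply_J_self hB, hxJx, hJ.2] at h₁ h₂
  exact ⟨by simpa [hx] using h₁, by simpa [hx] using h₂⟩

theorem isNondegComplexLine_span (hJ : IsPseudoHermitian B J) (hB : B.IsSymm) {x : V}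
    (hx : B x x ≠ 0) : IsNondegComplexLine B J (Submodule.span ℝ {x, J x}) := by
  refine ⟨?_, fun v hv => ?_, fun v hv hvπ => ?_⟩
  · have hli : LinearIndependent ℝ ![x, J x] := LinearIndependent.pair_iff.2 fun a b hab =>
      hJ.eq_zero_of_orthogonal_pair hB hx (by simp [hab]) (by simp [hab])
    rw [← Matrix.range_cons_cons_empty, finrank_span_eq_card hli, Fintype.card_fin]
  · have hJπ : ({x, J x} : Set V) ⊆ (Submodule.span ℝ {x, J x}).comap J := by
      rintro _ (rfl | rfl)
      · exact Submodule.subset_span (by simp)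
      · simpa [hJ.1] using Submodule.subset_span (R := ℝ) (by simp : x ∈ ({x, J x} : Set V))
    exact Submodule.span_le.2 hJπ hv
  · obtain ⟨a, b, rfl⟩ := Submodule.mem_span_pair.1 hv
    obtain ⟨rfl, rfl⟩ := hJ.eq_zero_of_orthogonal_pair hB hx
      (hvπ x (Submodule.subset_span (by simp))) (hvπ (J x) (Submodule.subset_span (by simp)))
    simp

end IsPseudoHermitian

namespace IsAlmostComplex

variable {B : LinearMap.BilinForm ℝ V} {J : V →ₗ[ℝ] V} {R : V → V → V → V → ℝ}

theorem apply_J_J_of_apply_self_ne_zero (hAC : IsAlmostComplex B J R) (hB : B.IsSymm)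
    (hnd : B.SeparatingLeft) (hJ : IsPseudoHermitian B J) (hR : IsAlgCurvTensor R) {x : V}
    (hx : B x x ≠ 0) (z w : V) : R x (J x) (J z) (J w) = R x (J x) z w := by
  obtain ⟨A, hA⟩ := hR.exists_curvatureOperator hnd x (J x)
  calc R x (J x) (J z) (J w) = B (A (J z)) (J w) := (hA _ _).symm
    _ = B (J (A z)) (J w) := by rw [hAC x (hJ.isNondegComplexLine_span hB hx) A hA z]
    _ = B (A z) w := hJ.2 _ _
    _ = R x (J x) z w := hA z w

theorem apply_J_J (hAC : IsAlmostComplex B J R) (hB : B.IsSymm) (hnd : B.SeparatingLeft)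
    (hJ : IsPseudoHermitian B J) (hR : IsAlgCurvTensor R) (x z w : V) :
    R x (J x) (J z) (J w) = R x (J x) z w := by
  rcases subsingleton_or_nontrivial V with hV | hV
  · rw [Subsingleton.elim (J z) z, Subsingleton.elim (J w) w]
  obtain ⟨v, hv⟩ := LinearMap.BilinForm.exists_bilinForm_self_ne_zero hnd.ne_zero
    (LinearMap.BilinForm.isSymm_iff.1 hB)
  have hAlt := LinearMap.BilinForm.isAlt_of_apply_self_eq_zero_of_ne_zero
    (Φ := hR.jDefect J z w) hv fun y hy => by
      simp [hAC.apply_J_J_of_apply_self_ne_zero hB hnd hJ hR hy]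
  simpa [sub_eq_zero] using hAlt.self_eq_zero x

end IsAlmostComplex

theorem IsAlgCurvTensor.isAlmostComplex_of_J_invariant {B : LinearMap.BilinForm ℝ V}
    {J : V →ₗ[ℝ] V} {R : V → V → V → V → ℝ} (hnd : B.SeparatingLeft)
    (hJ : IsPseudoHermitian B J) (hR : IsAlgCurvTensor R)
    (hinv : ∀ x y z w, R (J x) (J y) (J z) (J w) = R x y z w) :
    IsAlmostComplex B J R := by
  intro x _ A hA v
  have hRJ : ∀ w, R x (J x) (J v) w = -R x (J x) v (J w) := by
    intro w
    have h := hinv x (J x) v (J w)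
    rw [hJ.1, hJ.1, hR.map_neg_snd, hR.map_neg_fourth, neg_neg, hR.antisymm (J x)] at h
    linarith
  refine sub_eq_zero.1 (hnd _ fun w => ?_)
  rw [map_sub, LinearMap.sub_apply, hJ.apply_J_left, hA, hA, hRJ, sub_self]

/-- An algebraic curvature tensor `R` is almost complex (the curvature
operator `R(x, Jx)` is complex linear for every `x` spanning a nondegenerate complex
line) if and only if `J*R = R`. -/
theorem almostComplex_iff_J_invariant
    (B : LinearMap.BilinForm ℝ V)
    (hsymm : ∀ x y : V, B x y = B y x)
    (hnd : ∀ v : V, (∀ w : V, B v w = 0) → v = 0)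
    (J : V →ₗ[ℝ] V) (hJ : IsPseudoHermitian B J)
    (R : V → V → V → V → ℝ) (hR : IsAlgCurvTensor R) :
    IsAlmostComplex B J R ↔
      ∀ x y z w : V, R (J x) (J y) (J z) (J w) = R x y z w :=
  ⟨fun hAC => hR.J_invariant_of_apply_J_J hJ.1 (hAC.apply_J_J ⟨hsymm⟩ hnd hJ hR),
    hR.isAlmostComplex_of_J_invariant hnd hJ⟩
end

section
/- Let J be a pseudo-Hermitian almost complex structure on V and let φ be a self-adjoint linear map of V with φ∘J = J∘φ or φ∘J = -J∘φ. Then R_φ is an almost complex algebraic curvature tensor; in particular R_φ(Jx,Jy,Jz,Jw) = R_φ(x,y,z,w) for all x,y,z,w ∈ V. -/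
/-! Both hypotheses on `φ` say `φ ∘ J = ε • (J ∘ φ)` for a sign `ε`. Nondegeneracy identifies the
curvature operator `R_φ(x, Jx)` with `ε` times `v ↦ (Ju, v) u - (u, v) Ju`, where `u = φ x`, and the
latter commutes with `J` because `J` is an isometry with `J² = -1`. `R_φ` is quadratic in `φ`, so
the sign drops out of `R_φ(Jx, Jy, Jz, Jw) = ε² R_φ(x, y, z, w)`. -/

open Module

variable {V : Type*} [AddCommGroup V] [Module ℝ V] [FiniteDimensional ℝ V]

/-- `φ` is self-adjoint with respect to `B`. -/
def IsSelfAdj (B : LinearMap.BilinForm ℝ V) (φ : V →ₗ[ℝ] V) : Prop :=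
  ∀ x y : V, B (φ x) y = B x (φ y)

/-- `φ` is skew-adjoint with respect to `B`. -/
def IsSkewAdj (B : LinearMap.BilinForm ℝ V) (φ : V →ₗ[ℝ] V) : Prop :=
  ∀ x y : V, B (φ x) y = - B x (φ y)

/-- The curvature tensor `R_φ` associated to a self-adjoint map `φ`. -/
def Rs (B : LinearMap.BilinForm ℝ V) (φ : V →ₗ[ℝ] V) : V → V → V → V → ℝ :=
  fun x y z w => B (φ y) z * B (φ x) w - B (φ x) z * B (φ y) w

/-- The curvature tensor `R_φ` associated to a skew-adjoint map `φ`. -/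
def Ra (B : LinearMap.BilinForm ℝ V) (φ : V →ₗ[ℝ] V) : V → V → V → V → ℝ :=
  fun x y z w =>
    B (φ y) z * B (φ x) w - B (φ x) z * B (φ y) w - 2 * B (φ x) y * B (φ z) w

section

omit [FiniteDimensional ℝ V]

variable {B : LinearMap.BilinForm ℝ V} {J φ : V →ₗ[ℝ] V}

theorem IsSelfAdj.apply_comm (hsymm : ∀ x y : V, B x y = B y x) (hφ : IsSelfAdj B φ)
    (x y : V) : B (φ x) y = B (φ y) x := by
  rw [hφ, hsymm]

theorem isAlgCurvTensor_Rs (hsymm : ∀ x y : V, B x y = B y x) (hφ : IsSelfAdj B φ) :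
    IsAlgCurvTensor (Rs B φ) := by
  have hb := hφ.apply_comm hsymm
  refine ⟨?_, ?_, ?_, ?_, ?_, fun x y z w => ?_, fun x y z w => ?_⟩
  all_goals intros
  all_goals simp only [Rs, map_add, map_smul, LinearMap.add_apply, LinearMap.smul_apply,
    smul_eq_mul]
  iterate 5 ring
  · rw [hb w x, hb z y, hb z x, hb w y]; ring
  · rw [hb z y, hb z x, hb y x]; ring

theorem IsPseudoHermitian.isSkewAdj (hJ : IsPseudoHermitian B J) : IsSkewAdj B J := by
  intro x y
  rw [← hJ.2 x (J y), hJ.1, map_neg, neg_neg]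

theorem IsPseudoHermitian.map_smul_sub_smul (hJ : IsPseudoHermitian B J) (u v : V) :
    J (B (J u) v • u - B u v • J u) = B (J u) (J v) • u - B u (J v) • J u := by
  rw [hJ.2, map_sub, map_smul, map_smul, hJ.1, ← neg_neg (B u (J v)), ← hJ.isSkewAdj]
  module

theorem exists_sign_of_comm_or_anticomm
    (hcomm : (∀ x : V, φ (J x) = J (φ x)) ∨ (∀ x : V, φ (J x) = - J (φ x))) :
    ∃ ε : ℝ, ε * ε = 1 ∧ ∀ x : V, φ (J x) = ε • J (φ x) := by
  rcases hcomm with hc | hc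
  · exact ⟨1, by norm_num, fun x => by rw [hc, one_smul]⟩
  · exact ⟨-1, by norm_num, fun x => by rw [hc, neg_one_smul]⟩

theorem Rs_apply_J (hJ : IsPseudoHermitian B J) {ε : ℝ} (hε : ε * ε = 1)
    (hc : ∀ x : V, φ (J x) = ε • J (φ x)) (x y z w : V) :
    Rs B φ (J x) (J y) (J z) (J w) = Rs B φ x y z w := by
  have h : ∀ a b : V, B (φ (J a)) (J b) = ε * B (φ a) b := fun a b => by
    rw [hc, map_smul, LinearMap.smul_apply, hJ.2, smul_eq_mul]
  simp only [Rs, h]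
  linear_combination (B (φ y) z * B (φ x) w - B (φ x) z * B (φ y) w) * hε

theorem Rs_curvatureOperator_apply (hnd : ∀ v : V, (∀ w : V, B v w = 0) → v = 0)
    {x y : V} {A : V →ₗ[ℝ] V} (hA : ∀ z w : V, B (A z) w = Rs B φ x y z w) (z : V) :
    A z = B (φ y) z • φ x - B (φ x) z • φ y := by
  refine sub_eq_zero.mp (hnd _ fun w => ?_)
  simp only [map_sub, map_smul, LinearMap.sub_apply, LinearMap.smul_apply, smul_eq_mul, hA, Rs]
  ring

theorem isAlmostComplex_Rs (hnd : ∀ v : V, (∀ w : V, B v w = 0) → v = 0)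
    (hJ : IsPseudoHermitian B J) {ε : ℝ} (hc : ∀ x : V, φ (J x) = ε • J (φ x)) :
    IsAlmostComplex B J (Rs B φ) := by
  intro x _ A hA v
  have hAε : ∀ z, A z = ε • (B (J (φ x)) z • φ x - B (φ x) z • J (φ x)) := fun z => by
    rw [Rs_curvatureOperator_apply hnd hA, hc, map_smul, LinearMap.smul_apply, smul_eq_mul]
    module
  rw [hAε, hAε, map_smul, hJ.map_smul_sub_smul]

end

/-- If `φ` is self-adjoint and commutes or anticommutes with `J`, then
`R_φ` is an almost complex algebraic curvature tensor; in particular `J*R_φ = R_φ`. -/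
theorem Rs_almostComplex
    (B : LinearMap.BilinForm ℝ V)
    (hsymm : ∀ x y : V, B x y = B y x)
    (hnd : ∀ v : V, (∀ w : V, B v w = 0) → v = 0)
    (J : V →ₗ[ℝ] V) (hJ : IsPseudoHermitian B J)
    (φ : V →ₗ[ℝ] V) (hφ : IsSelfAdj B φ)
    (hcomm : (∀ x : V, φ (J x) = J (φ x)) ∨ (∀ x : V, φ (J x) = - J (φ x))) :
    IsAlgCurvTensor (Rs B φ) ∧ IsAlmostComplex B J (Rs B φ) ∧
      ∀ x y z w : V, Rs B φ (J x) (J y) (J z) (J w) = Rs B φ x y z w := by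
  obtain ⟨ε, hε, hc⟩ := exists_sign_of_comm_or_anticomm hcomm
  exact ⟨isAlgCurvTensor_Rs hsymm hφ, isAlmostComplex_Rs hnd hJ hc, Rs_apply_J hJ hε hc⟩
end

section
/- Let J be a pseudo-Hermitian almost complex structure on V and let φ be a skew-adjoint linear map of V with φ∘J = J∘φ or φ∘J = -J∘φ. Then R_φ is an almost complex algebraic curvature tensor; in particular R_φ(Jx,Jy,Jz,Jw) = R_φ(x,y,z,w) for all x,y,z,w ∈ V. -/
open Module

variable {V : Type*} [AddCommGroup V] [Module ℝ V] [FiniteDimensional ℝ V]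

/-!
`R_φ` is a quadratic expression in the antisymmetric form `a(x, y) = (φx, y)`, so the
curvature symmetries are polynomial identities in the values of `a`. If `φ` commutes
(resp. anticommutes) with the isometry `J`, then `a(Jx, Jy) = ε a(x, y)` with `ε = ±1`, and
`ε² = 1` makes `R_φ` `J`-invariant. Any `J`-invariant algebraic curvature tensor is almost
complex: invariance gives `R(x, Jx, Jv, w) = -R(x, Jx, v, Jw)`, and `(Jy, w) = -(y, Jw)`
turns this into `(J R(x, Jx) v - R(x, Jx) J v, w) = 0` for all `w`.
-/

section

variable {E : Type*} [AddCommGroup E] [Module ℝ E]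
  {B : LinearMap.BilinForm ℝ E} {J φ : E →ₗ[ℝ] E} {R : E → E → E → E → ℝ}

theorem IsAlgCurvTensor.map_neg_second (hR : IsAlgCurvTensor R) (x y z w : E) :
    R x (-y) z w = -R x y z w := by
  have h := hR.2.1 (-1) x y y z w
  have h0 := hR.2.1 (-1) x y 0 z w
  simp only [neg_smul, one_smul, neg_add_cancel, add_zero] at h h0
  linarith

theorem IsAlgCurvTensor.map_neg_third (hR : IsAlgCurvTensor R) (x y z w : E) :
    R x y (-z) w = -R x y z w := by
  have h := hR.2.2.1 (-1) x y z z w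
  have h0 := hR.2.2.1 (-1) x y z 0 w
  simp only [neg_smul, one_smul, neg_add_cancel, add_zero] at h h0
  linarith

theorem IsPseudoHermitian.apply_J_left_s5 (hJ : IsPseudoHermitian B J) (x y : E) :
    B (J x) y = -B x (J y) := by
  have h := hJ.2 x (J y)
  rw [hJ.1, map_neg] at h
  linarith

theorem IsAlgCurvTensor.isAlmostComplex_of_invariant
    (hnd : ∀ v : E, (∀ w : E, B v w = 0) → v = 0) (hJ : IsPseudoHermitian B J)
    (hR : IsAlgCurvTensor R) (hinv : ∀ x y z w : E, R (J x) (J y) (J z) (J w) = R x y z w) :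
    IsAlmostComplex B J R := by
  intro x _ A hA v
  have hJ_swap : ∀ w : E, R x (J x) (J v) w = -R x (J x) v (J w) := by
    intro w
    rw [← hinv, hJ.1, hJ.1, hR.map_neg_second, hR.map_neg_third, hR.2.2.2.2.1]
    ring
  refine sub_eq_zero.mp (hnd _ fun w => ?_)
  rw [map_sub, LinearMap.sub_apply, hJ.apply_J_left_s5, hA, hA, hJ_swap]
  ring

theorem IsSkewAdj.apply_swap (hsymm : ∀ x y : E, B x y = B y x) (hφ : IsSkewAdj B φ)
    (x y : E) : B (φ x) y = -B (φ y) x := by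
  rw [hφ, hsymm]

theorem isAlgCurvTensor_Ra (hsymm : ∀ x y : E, B x y = B y x) (hφ : IsSkewAdj B φ) :
    IsAlgCurvTensor (Ra B φ) := by
  have ha := hφ.apply_swap hsymm
  refine ⟨?_, ?_, ?_, ?_, ?_, ?_, ?_⟩
  iterate 4
    intros
    simp only [Ra, map_add, map_smul, LinearMap.add_apply, LinearMap.smul_apply, smul_eq_mul]
    ring
  · intro x y z w
    simp only [Ra]
    rw [ha x y]
    ring
  · intro x y z w
    simp only [Ra]
    rw [ha x y, ha z w, ha x z, ha x w, ha y z, ha y w]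
    ring
  · intro x y z w
    simp only [Ra]
    rw [ha x y, ha y z, ha x z]
    ring

theorem Ra_map_of_form_map_eq_smul {T : E →ₗ[ℝ] E} {ε : ℝ} (hε : ε * ε = 1)
    (hT : ∀ x y : E, B (φ (T x)) (T y) = ε * B (φ x) y) (x y z w : E) :
    Ra B φ (T x) (T y) (T z) (T w) = Ra B φ x y z w := by
  have h : Ra B φ (T x) (T y) (T z) (T w) = ε * ε * Ra B φ x y z w := by
    simp only [Ra, hT]
    ring
  rw [h, hε, one_mul]

theorem IsPseudoHermitian.exists_form_map_eq_smul (hJ : IsPseudoHermitian B J)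
    (hcomm : (∀ x : E, φ (J x) = J (φ x)) ∨ (∀ x : E, φ (J x) = -J (φ x))) :
    ∃ ε : ℝ, ε * ε = 1 ∧ ∀ x y : E, B (φ (J x)) (J y) = ε * B (φ x) y := by
  rcases hcomm with h | h
  · exact ⟨1, by norm_num, fun x y => by rw [h, hJ.2, one_mul]⟩
  · exact ⟨-1, by norm_num, fun x y => by rw [h, map_neg, LinearMap.neg_apply, hJ.2]; ring⟩

end

/-- If `φ` is skew-adjoint and commutes or anticommutes with `J`, then
`R_φ` is an almost complex algebraic curvature tensor; in particular `J*R_φ = R_φ`. -/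
theorem Ra_almostComplex
    (B : LinearMap.BilinForm ℝ V)
    (hsymm : ∀ x y : V, B x y = B y x)
    (hnd : ∀ v : V, (∀ w : V, B v w = 0) → v = 0)
    (J : V →ₗ[ℝ] V) (hJ : IsPseudoHermitian B J)
    (φ : V →ₗ[ℝ] V) (hφ : IsSkewAdj B φ)
    (hcomm : (∀ x : V, φ (J x) = J (φ x)) ∨ (∀ x : V, φ (J x) = - J (φ x))) :
    IsAlgCurvTensor (Ra B φ) ∧ IsAlmostComplex B J (Ra B φ) ∧
      ∀ x y z w : V, Ra B φ (J x) (J y) (J z) (J w) = Ra B φ x y z w := by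
  have hR := isAlgCurvTensor_Ra hsymm hφ
  obtain ⟨ε, hε, hJa⟩ := hJ.exists_form_map_eq_smul hcomm
  have hinv := Ra_map_of_form_map_eq_smul hε hJa
  exact ⟨hR, hR.isAlmostComplex_of_invariant hnd hJ hinv, hinv⟩
end

section
/- Let J be a pseudo-Hermitian almost complex structure on V and let φ be a linear map of V that is either self-adjoint or skew-adjoint and satisfies J∘φ = φ∘J. Then R := R_φ satisfies the Gray identity: R(x,y,z,w) + R(Jx,Jy,Jz,Jw) = R(Jx,Jy,z,w) + R(Jx,y,Jz,w) + R(Jx,y,z,Jw) + R(x,Jy,Jz,w) + R(x,Jy,z,Jw) + R(x,y,Jz,Jw) for all x,y,z,w ∈ V. -/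
open Module

variable {V : Type*} [AddCommGroup V] [Module ℝ V] [FiniteDimensional ℝ V]

section InvariantForm

variable {R M : Type*} [CommRing R] [AddCommGroup M] [Module R M]
  {J : M →ₗ[R] M}

theorem apply_map_left_eq_neg_apply_map_right (hJ : ∀ x, J (J x) = -x)
    {b : LinearMap.BilinForm R M} (hb : ∀ x y, b (J x) (J y) = b x y) (x y : M) :
    b (J x) y = -b x (J y) := by
  rw [← hb, hJ, map_neg, LinearMap.neg_apply]

theorem comp_invariant_of_commute {B : LinearMap.BilinForm R M}
    (hB : ∀ x y, B (J x) (J y) = B x y) {φ : M →ₗ[R] M} (hcomm : ∀ x, J (φ x) = φ (J x))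
    (x y : M) : (B ∘ₗ φ) (J x) (J y) = (B ∘ₗ φ) x y := by
  simp only [LinearMap.comp_apply, ← hcomm, hB]

/-- The Gray identity for the product `b(x,y) c(z,w)` of two `J`-invariant forms: moving a `J`
across a form costs a sign, so the four mixed terms cancel in pairs. -/
theorem gray_identity_mul (hJ : ∀ x, J (J x) = -x) {b c : LinearMap.BilinForm R M}
    (hb : ∀ x y, b (J x) (J y) = b x y) (hc : ∀ x y, c (J x) (J y) = c x y) (x y z w : M) :
    b x y * c z w + b (J x) (J y) * c (J z) (J w) =
      b (J x) (J y) * c z w + b (J x) y * c (J z) w + b (J x) y * c z (J w) +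
        b x (J y) * c (J z) w + b x (J y) * c z (J w) + b x y * c (J z) (J w) := by
  rw [apply_map_left_eq_neg_apply_map_right hJ hc z w, hb, hc]
  ring

end InvariantForm

theorem Rphi_gray_identity_general
    (B : LinearMap.BilinForm ℝ V)
    (J : V →ₗ[ℝ] V) (hJ : IsPseudoHermitian B J)
    (φ : V →ₗ[ℝ] V) (R : V → V → V → V → ℝ)
    (hR : (IsSelfAdj B φ ∧ R = Rs B φ) ∨ (IsSkewAdj B φ ∧ R = Ra B φ))
    (hcomm : ∀ x : V, J (φ x) = φ (J x)) :
    ∀ x y z w : V,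
      R x y z w + R (J x) (J y) (J z) (J w) =
        R (J x) (J y) z w + R (J x) y (J z) w + R (J x) y z (J w) +
          R x (J y) (J z) w + R x (J y) z (J w) + R x y (J z) (J w) := by
  obtain ⟨hJJ, hBJ⟩ := hJ
  have hb := comp_invariant_of_commute hBJ hcomm
  have gray := gray_identity_mul hJJ hb hb
  intro x y z w
  -- Each term of `R_φ` is a product `b(·,·) b(·,·)` with `b = B ∘ φ`, up to a permutation of
  -- the slots, and the Gray identity is invariant under such permutations.
  rcases hR with ⟨-, rfl⟩ | ⟨-, rfl⟩
  · simp only [Rs]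
    linear_combination gray y z x w - gray x z y w
  · simp only [Ra]
    linear_combination gray y z x w - gray x z y w - 2 * gray x y z w

/-- If `φ` is self-adjoint or skew-adjoint and commutes with `J`, then
`R := R_φ` satisfies the Gray identity. -/
theorem Rphi_gray_identity
    (B : LinearMap.BilinForm ℝ V)
    (hsymm : ∀ x y : V, B x y = B y x)
    (hnd : ∀ v : V, (∀ w : V, B v w = 0) → v = 0)
    (J : V →ₗ[ℝ] V) (hJ : IsPseudoHermitian B J)
    (φ : V →ₗ[ℝ] V) (R : V → V → V → V → ℝ)
    (hR : (IsSelfAdj B φ ∧ R = Rs B φ) ∨ (IsSkewAdj B φ ∧ R = Ra B φ))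
    (hcomm : ∀ x : V, J (φ x) = φ (J x)) :
    ∀ x y z w : V,
      R x y z w + R (J x) (J y) (J z) (J w) =
        R (J x) (J y) z w + R (J x) y (J z) w + R (J x) y z (J w) +
          R x (J y) (J z) w + R x (J y) z (J w) + R x y (J z) (J w) :=
  Rphi_gray_identity_general B J hJ φ R hR hcomm
end

section
/- Let V be a real inner product space (positive definite) of dimension 4s with s ≥ 2, let {i,j,k} be a skew-adjoint quaternion structure on V, and set J = i. For any distinct real numbers λ₀, λ₁ there exist constants c₀, c₁, c₂, c₃ ∈ ℝ such that, setting R := c₀R_Id + c₁R_i + c₂R_j + c₃R_k, for every unit vector x ∈ V the operator J∘R(x,Jx) commutes with J and is self-adjoint, and, viewed as a complex-linear operator on (V,J) ≅ ℂ^{2s}, has exactly the eigenvalues λ₀ with multiplicity 2s-2 and λ₁ with multiplicity 2. -/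
open Module

variable {V : Type*} [AddCommGroup V] [Module ℝ V] [FiniteDimensional ℝ V]

/-- `{i, j, k}` is a skew-adjoint quaternion structure on `(V, B)`. -/
def IsQuatStruct (B : LinearMap.BilinForm ℝ V) (i j k : V →ₗ[ℝ] V) : Prop :=
  IsSkewAdj B i ∧ IsSkewAdj B j ∧ IsSkewAdj B k ∧
  (∀ x : V, i (i x) = -x) ∧ (∀ x : V, j (j x) = -x) ∧ (∀ x : V, k (k x) = -x) ∧
  (∀ x : V, i (j x) = k x) ∧ (∀ x : V, j (i x) = - k x) ∧
  (∀ x : V, j (k x) = i x) ∧ (∀ x : V, k (j x) = - i x) ∧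
  (∀ x : V, k (i x) = j x) ∧ (∀ x : V, i (k x) = - j x)

/-!
For a unit vector `x` the vectors `x, i x, j x, k x` are orthonormal, and a direct computation
gives `i ∘ R(x, i x) = 2c₁ • 1 + (c₀ + c₁) • P' - (c₂ + c₃) • P''`, where `P'` and `P''` are the
orthogonal projections onto `span {x, i x}` and `span {j x, k x}`. Choosing `c₁ = λ₀ / 2`,
`c₀ + c₁ = λ₁ - λ₀` and `c₂ + c₃ = λ₀ - λ₁` makes this `λ₀ • 1 + (λ₁ - λ₀) • P`, with `P = P' + P''`
the orthogonal projection onto the quaternion line through `x`. That line is `i`-invariant and `i`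
is skew-adjoint, so `P` commutes with `i`; as a self-adjoint idempotent of rank `4`, `P` splits `V`
into the eigenspaces `range P` (real dimension `4`) and `ker P` (real dimension `4s - 4`).
-/

namespace LinearMap.SeparatingLeft

variable {E : Type*} [AddCommGroup E] [Module ℝ E] {B : LinearMap.BilinForm ℝ E}

theorem eq_of_apply_eq (hB : LinearMap.SeparatingLeft B) {u v : E} (h : ∀ w, B u w = B v w) :
    u = v :=
  sub_eq_zero.mp <| hB _ fun w => by rw [map_sub, LinearMap.sub_apply, h, sub_self]

end LinearMap.SeparatingLeft

section Eigenspaces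

open Module.End

variable {K M : Type*} [Field K] [AddCommGroup M] [Module K M] {P : Module.End K M} {a₀ a₁ : K}

theorem mem_eigenspace_smul_one_add_smul_iff {c : K} {v : M} :
    v ∈ eigenspace (a₀ • 1 + (a₁ - a₀) • P) c ↔ (a₁ - a₀) • P v = (c - a₀) • v := by
  rw [mem_eigenspace_iff, LinearMap.add_apply, LinearMap.smul_apply, LinearMap.smul_apply,
    Module.End.one_apply, sub_smul c a₀ v, eq_sub_iff_add_eq']

theorem eigenspace_smul_one_add_smul_left (h : a₀ ≠ a₁) :
    eigenspace (a₀ • 1 + (a₁ - a₀) • P) a₀ = LinearMap.ker P := by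
  ext v
  rw [mem_eigenspace_smul_one_add_smul_iff, sub_self, zero_smul,
    smul_eq_zero_iff_right (sub_ne_zero.mpr h.symm), LinearMap.mem_ker]

namespace IsIdempotentElem

theorem eigenspace_smul_one_add_smul_right (hP : IsIdempotentElem P) (h : a₀ ≠ a₁) :
    eigenspace (a₀ • 1 + (a₁ - a₀) • P) a₁ = LinearMap.range P := by
  ext v
  rw [mem_eigenspace_smul_one_add_smul_iff,
    (smul_right_injective M (sub_ne_zero.mpr h.symm)).eq_iff,
    LinearMap.IsIdempotentElem.mem_range_iff hP]

theorem eigenspace_smul_one_add_smul_of_ne (hP : IsIdempotentElem P) {c : K} (hc₀ : c ≠ a₀)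
    (hc₁ : c ≠ a₁) : eigenspace (a₀ • 1 + (a₁ - a₀) • P) c = ⊥ := by
  refine (Submodule.eq_bot_iff _).mpr fun v hv => ?_
  rw [mem_eigenspace_smul_one_add_smul_iff] at hv
  have hPv : (a₁ - a₀) • P v = (c - a₀) • P v := by
    have := congrArg P hv
    rwa [map_smul, map_smul, ← Module.End.mul_apply, hP.eq] at this
  have hPv0 : P v = 0 := by
    rw [← sub_eq_zero, ← sub_smul, sub_sub_sub_cancel_right] at hPv
    exact (smul_eq_zero.mp hPv).resolve_left (sub_ne_zero.mpr hc₁.symm)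
  rw [hPv0, smul_zero, eq_comm, smul_eq_zero] at hv
  exact hv.resolve_left (sub_ne_zero.mpr hc₀)

end IsIdempotentElem

end Eigenspaces

section OrthoProj

variable {E ι : Type*} [AddCommGroup E] [Module ℝ E] {B : LinearMap.BilinForm ℝ E} {v : ι → E}

def IsOrthonormal [DecidableEq ι] (B : LinearMap.BilinForm ℝ E) (v : ι → E) : Prop :=
  ∀ a b, B (v a) (v b) = if a = b then 1 else 0

theorem IsOrthonormal.linearIndependent [DecidableEq ι] (hv : IsOrthonormal B v) :
    LinearIndependent ℝ v :=
  LinearMap.BilinForm.linearIndependent_of_iIsOrtho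
    (fun a b hab => by simpa [hab] using hv a b) (fun a => by simp [hv a a])

variable [Fintype ι]

def orthoProj (B : LinearMap.BilinForm ℝ E) (v : ι → E) : Module.End ℝ E :=
  ∑ a, (B (v a)).smulRight (v a)

theorem orthoProj_apply (z : E) : orthoProj B v z = ∑ a, B (v a) z • v a := by
  simp [orthoProj]

theorem isSelfAdj_orthoProj (hsymm : ∀ x y, B x y = B y x) : IsSelfAdj B (orthoProj B v) := by
  intro z w
  rw [orthoProj_apply, orthoProj_apply, map_sum, LinearMap.sum_apply, map_sum]
  simp only [map_smul, LinearMap.smul_apply, smul_eq_mul]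
  exact Finset.sum_congr rfl fun a _ => by rw [hsymm z (v a)]; ring

variable [DecidableEq ι]

theorem IsOrthonormal.orthoProj_apply_self (hv : IsOrthonormal B v) (b : ι) :
    orthoProj B v (v b) = v b := by
  rw [orthoProj_apply, Finset.sum_eq_single b (fun a _ hab => by simp [hv a b, hab]) (by simp),
    hv b b, if_pos rfl, one_smul]

theorem IsOrthonormal.isIdempotentElem_orthoProj (hv : IsOrthonormal B v) :
    IsIdempotentElem (orthoProj B v) := by
  ext z
  rw [Module.End.mul_apply, orthoProj_apply z, map_sum]
  simp only [map_smul, hv.orthoProj_apply_self]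

theorem IsOrthonormal.range_orthoProj (hv : IsOrthonormal B v) :
    LinearMap.range (orthoProj B v) = Submodule.span ℝ (Set.range v) := by
  refine le_antisymm ?_ (Submodule.span_le.mpr ?_)
  · rintro _ ⟨z, rfl⟩
    rw [orthoProj_apply]
    exact Submodule.sum_mem _ fun a _ => Submodule.smul_mem _ _ (Submodule.subset_span ⟨a, rfl⟩)
  · rintro _ ⟨b, rfl⟩
    exact ⟨v b, hv.orthoProj_apply_self b⟩

theorem IsOrthonormal.finrank_range_orthoProj (hv : IsOrthonormal B v) :
    finrank ℝ (LinearMap.range (orthoProj B v)) = Fintype.card ι := by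
  rw [hv.range_orthoProj, finrank_span_eq_card hv.linearIndependent]

end OrthoProj

section SkewAdjoint

variable {E : Type*} [AddCommGroup E] [Module ℝ E] {B : LinearMap.BilinForm ℝ E}
  {φ P : Module.End ℝ E}

theorem IsSelfAdj.smul_one_add_smul (hP : IsSelfAdj B P) (a c : ℝ) :
    IsSelfAdj B (a • 1 + c • P) := by
  intro z w
  simp only [LinearMap.add_apply, LinearMap.smul_apply, Module.End.one_apply, map_add, map_smul,
    smul_eq_mul, hP z w]

theorem IsSkewAdj.apply_self_right (hsymm : ∀ x y, B x y = B y x) (hφ : IsSkewAdj B φ) (x : E) :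
    B x (φ x) = 0 := by
  linarith [hφ x x, hsymm (φ x) x]

theorem IsSkewAdj.isPseudoHermitian (hφ : IsSkewAdj B φ) (hsq : ∀ x, φ (φ x) = -x) :
    IsPseudoHermitian B φ :=
  ⟨hsq, fun x y => by rw [hφ, hsq, map_neg, neg_neg]⟩

theorem IsSkewAdj.commute_of_isSelfAdj (hsep : LinearMap.SeparatingLeft B) (hφ : IsSkewAdj B φ)
    (hP : IsSelfAdj B P) (hPP : IsIdempotentElem P)
    (hinv : LinearMap.range P ≤ (LinearMap.range P).comap φ) : Commute φ P := by
  have hPφP (u : E) : P (φ (P u)) = φ (P u) :=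
    (LinearMap.IsIdempotentElem.mem_range_iff hPP).mp (hinv ⟨u, rfl⟩)
  refine LinearMap.ext fun z => (hsep.eq_of_apply_eq fun w => ?_).symm
  calc B (P (φ z)) w = B (φ z) (P w) := hP _ _
    _ = -B z (P (φ (P w))) := by rw [hφ, hPφP]
    _ = B (φ (P z)) (P w) := by rw [← hP, hφ]
    _ = B (φ (P z)) w := by rw [← hP, hPφP]

end SkewAdjoint

namespace IsQuatStruct

variable {E : Type*} [AddCommGroup E] [Module ℝ E] {B : LinearMap.BilinForm ℝ E}
  {i j k : Module.End ℝ E}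

theorem isOrthonormal (hsymm : ∀ x y, B x y = B y x) (hq : IsQuatStruct B i j k) {x : E}
    (hx : B x x = 1) : IsOrthonormal B ![x, i x, j x, k x] := by
  obtain ⟨hi, hj, hk, hii, hjj, hkk, hij, -, hjk, -, -, hik⟩ := hq
  have hxi := hi.apply_self_right hsymm x
  have hxj := hj.apply_self_right hsymm x
  have hxk := hk.apply_self_right hsymm x
  have hii' := (hi.isPseudoHermitian hii).2 x x
  have hjj' := (hj.isPseudoHermitian hjj).2 x x
  have hkk' := (hk.isPseudoHermitian hkk).2 x x
  have hij' : B (i x) (j x) = 0 := by rw [hi, hij, hxk, neg_zero]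
  have hik' : B (i x) (k x) = 0 := by rw [hi, hik, map_neg, hxj, neg_zero, neg_zero]
  have hjk' : B (j x) (k x) = 0 := by rw [hj, hjk, hxi, neg_zero]
  intro a b
  fin_cases a <;> fin_cases b <;>
    simp [hx, hxi, hxj, hxk, hii', hjj', hkk', hij', hik', hjk', hsymm _ x, hsymm (j x) (i x),
      hsymm (k x) (i x), hsymm (k x) (j x)]

theorem span_le_comap_span (hq : IsQuatStruct B i j k) (x : E) :
    Submodule.span ℝ (Set.range ![x, i x, j x, k x]) ≤
      (Submodule.span ℝ (Set.range ![x, i x, j x, k x])).comap i := by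
  obtain ⟨-, -, -, hii, -, -, hij, -, -, -, -, hik⟩ := hq
  refine Submodule.span_le.mpr ?_
  rintro _ ⟨a, rfl⟩
  have mem (b : Fin 4) :
      ![x, i x, j x, k x] b ∈ Submodule.span ℝ (Set.range ![x, i x, j x, k x]) :=
    Submodule.subset_span ⟨b, rfl⟩
  fin_cases a
  · exact mem 1
  · simpa [hii] using Submodule.neg_mem _ (mem 0)
  · simpa [hij] using mem 3
  · simpa [hik] using Submodule.neg_mem _ (mem 2)

theorem curvature_apply (hsymm : ∀ x y, B x y = B y x) (hsep : LinearMap.SeparatingLeft B)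
    (hq : IsQuatStruct B i j k) {x : E} (hx : B x x = 1) {c₀ c₁ c₂ c₃ : ℝ} {A : Module.End ℝ E}
    (hA : ∀ z w, B (A z) w =
      c₀ * Rs B LinearMap.id x (i x) z w + c₁ * Ra B i x (i x) z w +
        c₂ * Ra B j x (i x) z w + c₃ * Ra B k x (i x) z w) (z : E) :
    i (A z) = (2 * c₁) • z + (c₀ + c₁) • (B x z • x + B (i x) z • i x) -
      (c₂ + c₃) • (B (j x) z • j x + B (k x) z • k x) := by
  have hv := hq.isOrthonormal hsymm hx
  have h₁₁ : B (i x) (i x) = 1 := by simpa using hv 1 1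
  have h₂₁ : B (j x) (i x) = 0 := by simpa using hv 2 1
  have h₃₁ : B (k x) (i x) = 0 := by simpa using hv 3 1
  obtain ⟨-, -, -, hii, -, -, hij, hji, -, -, hki, hik⟩ := hq
  have hAz : A z = -(2 * c₁) • i z + (c₀ + c₁) • (B (i x) z • x - B x z • i x) +
      (c₂ + c₃) • (B (j x) z • k x - B (k x) z • j x) := hsep.eq_of_apply_eq fun w => by
    simp only [hA, Rs, Ra, LinearMap.id_coe, id_eq, hii, hji, hki, map_neg, map_sub, map_add,
      map_smul, LinearMap.neg_apply, LinearMap.sub_apply, LinearMap.add_apply,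
      LinearMap.smul_apply, smul_eq_mul, h₁₁, h₂₁, h₃₁]
    ring
  rw [hAz]
  simp only [map_add, map_sub, map_smul, hii, hij, hik]
  module

end IsQuatStruct

theorem eigenvalues_quaternion_two_general
    (B : LinearMap.BilinForm ℝ V)
    (hsymm : ∀ x y : V, B x y = B y x)
    (hpos : ∀ x : V, x ≠ 0 → 0 < B x x)
    (s : ℕ) (hdim : finrank ℝ V = 4 * s)
    (i j k : V →ₗ[ℝ] V) (hquat : IsQuatStruct B i j k)
    (a₀ a₁ : ℝ) (hne : a₀ ≠ a₁) :
    ∃ c₀ c₁ c₂ c₃ : ℝ, ∀ x : V, B x x = 1 →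
      ∀ A : V →ₗ[ℝ] V,
        (∀ z w : V, B (A z) w =
          c₀ * Rs B LinearMap.id x (i x) z w + c₁ * Ra B i x (i x) z w +
            c₂ * Ra B j x (i x) z w + c₃ * Ra B k x (i x) z w) →
        (∀ v : V, i ((i ∘ₗ A) v) = (i ∘ₗ A) (i v)) ∧
        (∀ z w : V, B ((i ∘ₗ A) z) w = B z ((i ∘ₗ A) w)) ∧
        finrank ℝ (Module.End.eigenspace (i ∘ₗ A) a₀) = 2 * (2 * s - 2) ∧
        finrank ℝ (Module.End.eigenspace (i ∘ₗ A) a₁) = 2 * 2 ∧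
        (∀ c : ℝ, c ≠ a₀ → c ≠ a₁ → Module.End.eigenspace (i ∘ₗ A) c = ⊥) := by
  have hsep : LinearMap.SeparatingLeft B := fun z hz => by
    by_contra hz0
    exact (hpos z hz0).ne' (hz z)
  refine ⟨a₁ - 3 / 2 * a₀, a₀ / 2, a₀ - a₁, 0, fun x hx A hA => ?_⟩
  have hv := hquat.isOrthonormal hsymm hx
  set P := orthoProj B ![x, i x, j x, k x]
  have hPP : IsIdempotentElem P := hv.isIdempotentElem_orthoProj
  have hP : IsSelfAdj B P := isSelfAdj_orthoProj hsymm
  have hT : i ∘ₗ A = a₀ • 1 + (a₁ - a₀) • P := by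
    ext z
    simp only [LinearMap.comp_apply, hquat.curvature_apply hsymm hsep hx hA z, P,
      orthoProj_apply, Fin.sum_univ_four, Matrix.cons_val, LinearMap.add_apply,
      LinearMap.smul_apply, Module.End.one_apply]
    module
  have hcomm : Commute i P := hquat.1.commute_of_isSelfAdj hsep hP hPP
    (hv.range_orthoProj ▸ hquat.span_le_comap_span x)
  have hrank : finrank ℝ (LinearMap.range P) = 4 := hv.finrank_range_orthoProj
  have hnull := LinearMap.finrank_range_add_finrank_ker P
  rw [hT]
  refine ⟨LinearMap.congr_fun (((Commute.one_right i).smul_right a₀).add_right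
      (hcomm.smul_right _)), hP.smul_one_add_smul a₀ _, ?_, ?_,
    fun c hc₀ hc₁ => hPP.eigenspace_smul_one_add_smul_of_ne hc₀ hc₁⟩
  · rw [eigenspace_smul_one_add_smul_left hne]
    omega
  · rw [hPP.eigenspace_smul_one_add_smul_right hne, hrank]

/-- On a positive definite space of dimension `4s` (`s ≥ 2`) with a
skew-adjoint quaternion structure `{i, j, k}` and `J = i`, for any distinct reals
`a₀ ≠ a₁` one can choose `c₀, c₁, c₂, c₃` so that for
`R = c₀ R_Id + c₁ R_i + c₂ R_j + c₃ R_k` and every unit `x`, the operator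
`T = J ∘ R(x, Jx)` commutes with `J`, is self-adjoint, and (as a complex-linear
operator on `(V, J) ≅ ℂ^{2s}`) has exactly the eigenvalues `a₀` with multiplicity
`2s - 2` and `a₁` with multiplicity `2` (complex multiplicity `μ` corresponds to
real eigenspace dimension `2μ`). -/
theorem eigenvalues_quaternion_two
    (B : LinearMap.BilinForm ℝ V)
    (hsymm : ∀ x y : V, B x y = B y x)
    (hpos : ∀ x : V, x ≠ 0 → 0 < B x x)
    (s : ℕ) (hs : 2 ≤ s) (hdim : finrank ℝ V = 4 * s)
    (i j k : V →ₗ[ℝ] V) (hquat : IsQuatStruct B i j k)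
    (a₀ a₁ : ℝ) (hne : a₀ ≠ a₁) :
    ∃ c₀ c₁ c₂ c₃ : ℝ, ∀ x : V, B x x = 1 →
      ∀ A : V →ₗ[ℝ] V,
        (∀ z w : V, B (A z) w =
          c₀ * Rs B LinearMap.id x (i x) z w + c₁ * Ra B i x (i x) z w +
            c₂ * Ra B j x (i x) z w + c₃ * Ra B k x (i x) z w) →
        (∀ v : V, i ((i ∘ₗ A) v) = (i ∘ₗ A) (i v)) ∧
        (∀ z w : V, B ((i ∘ₗ A) z) w = B z ((i ∘ₗ A) w)) ∧
        finrank ℝ (Module.End.eigenspace (i ∘ₗ A) a₀) = 2 * (2 * s - 2) ∧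
        finrank ℝ (Module.End.eigenspace (i ∘ₗ A) a₁) = 2 * 2 ∧
        (∀ c : ℝ, c ≠ a₀ → c ≠ a₁ → Module.End.eigenspace (i ∘ₗ A) c = ⊥) :=
  eigenvalues_quaternion_two_general B hsymm hpos s hdim i j k hquat a₀ a₁ hne
end

section
/- Let V be a real inner product space (positive definite) of dimension 4s with s ≥ 2, let {i,j,k} be a skew-adjoint quaternion structure on V, and set J = i. For any pairwise distinct real numbers λ₀, λ₁, λ₂ there exist constants c₀, c₁, c₂, c₃ ∈ ℝ such that, setting R := c₀R_Id + c₁R_i + c₂R_j + c₃R_k, for every unit vector x ∈ V the operator J∘R(x,Jx) commutes with J and is self-adjoint, and, viewed as a complex-linear operator on (V,J) ≅ ℂ^{2s}, has exactly the eigenvalues λ₀ with multiplicity 2s-2, λ₁ with multiplicity 1, and λ₂ with multiplicity 1. -/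
/-! On the pair `(x, i x)` the tensors `R_j` and `R_k` agree, and `T = i ∘ R(x, i x)` works out to
`2c₁ + (c₀ + c₁) P₁ - (c₂ + c₃) P₂`, where `P₁`, `P₂` are the orthogonal projections onto the planes
spanned by `x, i x` and by `j x, k x`; for a unit vector `x` the frame `x, i x, j x, k x` is
orthonormal. Choosing `2c₁ = a₀`, `c₀ + c₁ = a₁ - a₀` and `c₂ + c₃ = a₀ - a₂` makes `T` self-adjoint
with eigenvalue `a₁` on the first plane, `a₂` on the second and `a₀` on their orthogonal complement,
of real dimension `4s - 4`. Both planes are `i`-invariant, hence `T` commutes with `i`. -/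

open Module

variable {V : Type*} [AddCommGroup V] [Module ℝ V] [FiniteDimensional ℝ V]

section OrthonormalFrame

variable {E ι : Type*} [AddCommGroup E] [Module ℝ E] [Fintype ι]
  {B : LinearMap.BilinForm ℝ E} {e : ι → E} {T : E →ₗ[ℝ] E} {a₀ c : ℝ} {μ : ι → ℝ}

theorem eq_of_forall_bilin_eq (hpos : ∀ x : E, x ≠ 0 → 0 < B x x) {u v : E}
    (h : ∀ w, B u w = B v w) : u = v := by
  by_contra huv
  have h0 : ∀ w, B (u - v) w = 0 := fun w => by rw [map_sub, LinearMap.sub_apply, h, sub_self]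
  exact (hpos _ (sub_ne_zero.mpr huv)).ne' (h0 _)

theorem linearIndependent_of_orthonormal [DecidableEq ι]
    (he : ∀ s t, B (e s) (e t) = if s = t then 1 else 0) :
    LinearIndependent ℝ e := by
  rw [Fintype.linearIndependent_iff]
  intro g hg s
  simpa [map_sum, he] using congrArg (B (e s)) hg

variable (hT : ∀ z, T z = a₀ • z + ∑ t, (μ t - a₀) • B (e t) z • e t)
include hT

theorem isSelfAdj_of_frame (hsymm : ∀ x y : E, B x y = B y x) : IsSelfAdj B T := by
  intro z w
  rw [hT, hT]
  simp only [map_add, map_sum, map_smul, LinearMap.add_apply, LinearMap.sum_apply,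
    LinearMap.smul_apply, smul_eq_mul]
  congr 1
  refine Finset.sum_congr rfl fun t _ => ?_
  rw [hsymm z (e t)]
  ring

variable [DecidableEq ι] (he : ∀ s t, B (e s) (e t) = if s = t then 1 else 0)
include he

theorem apply_frame (s : ι) : T (e s) = μ s • e s := by
  rw [hT]
  simp only [he, ite_smul, one_smul, zero_smul, smul_ite, smul_zero, Finset.sum_ite_eq',
    Finset.mem_univ, ↓reduceIte]
  rw [← add_smul, add_sub_cancel]

theorem bilin_frame_apply (t : ι) (u : E) : B (e t) (T u) = μ t * B (e t) u := by
  rw [hT]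
  simp only [map_add, map_smul, smul_eq_mul, map_sum, he, mul_ite, mul_one, mul_zero,
    Finset.sum_ite_eq, Finset.mem_univ, ↓reduceIte]
  ring

theorem bilin_frame_eq_zero_of_mem_eigenspace {u : E} (hu : u ∈ Module.End.eigenspace T c)
    {t : ι} (ht : μ t ≠ c) : B (e t) u = 0 := by
  rw [Module.End.mem_eigenspace_iff] at hu
  have h := bilin_frame_apply hT he t u
  rw [hu, map_smul, smul_eq_mul] at h
  have h' : (μ t - c) * B (e t) u = 0 := by linarith
  exact (mul_eq_zero.mp h').resolve_left (sub_ne_zero.mpr ht)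

theorem eigenspace_eq_span_frame (hc : c ≠ a₀) :
    Module.End.eigenspace T c = Submodule.span ℝ (Set.range fun t : {t // μ t = c} => e t) := by
  apply le_antisymm
  · intro u hu
    have hsum : (c - a₀) • u = ∑ t, (μ t - a₀) • B (e t) u • e t := by
      rw [sub_smul, ← Module.End.mem_eigenspace_iff.mp hu, hT, add_sub_cancel_left]
    rw [← Submodule.smul_mem_iff _ (sub_ne_zero.mpr hc), hsum]
    refine Submodule.sum_mem _ fun t _ => ?_
    by_cases ht : μ t = c
    · exact Submodule.smul_mem _ _ (Submodule.smul_mem _ _ (Submodule.subset_span ⟨⟨t, ht⟩, rfl⟩))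
    · rw [bilin_frame_eq_zero_of_mem_eigenspace hT he hu ht, zero_smul, smul_zero]
      exact Submodule.zero_mem _
  · rw [Submodule.span_le]
    rintro _ ⟨⟨t, rfl⟩, rfl⟩
    exact Module.End.mem_eigenspace_iff.mpr (apply_frame hT he t)

theorem finrank_eigenspace_of_frame (hc : c ≠ a₀) :
    finrank ℝ (Module.End.eigenspace T c) = Fintype.card {t // μ t = c} := by
  rw [eigenspace_eq_span_frame hT he hc, finrank_span_eq_card]
  exact (linearIndependent_of_orthonormal he).comp _ Subtype.val_injective

theorem eigenspace_eq_bot_of_frame (hc : c ≠ a₀) (hμ : ∀ t, μ t ≠ c) :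
    Module.End.eigenspace T c = ⊥ := by
  rw [eigenspace_eq_span_frame hT he hc, Submodule.span_eq_bot]
  rintro _ ⟨⟨t, ht⟩, rfl⟩
  exact absurd ht (hμ t)

theorem finrank_eigenspace_add_card [FiniteDimensional ℝ E] (hμ : ∀ t, μ t ≠ a₀) :
    finrank ℝ (Module.End.eigenspace T a₀) + Fintype.card ι = finrank ℝ E := by
  let L : E →ₗ[ℝ] (ι → ℝ) := LinearMap.pi fun t => B (e t)
  have hker : Module.End.eigenspace T a₀ = LinearMap.ker L := by
    ext u
    rw [LinearMap.mem_ker]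
    constructor
    · intro hu
      funext t
      exact bilin_frame_eq_zero_of_mem_eigenspace hT he hu (hμ t)
    · intro hu
      have h0 : ∀ t, B (e t) u = 0 := fun t => congrFun hu t
      rw [Module.End.mem_eigenspace_iff, hT]
      simp [h0]
  have hsurj : Function.Surjective L := fun f => ⟨∑ t, f t • e t, by ext s; simp [L, map_sum, he]⟩
  rw [hker, ← LinearMap.finrank_range_add_finrank_ker L, LinearMap.range_eq_top.mpr hsurj,
    finrank_top, Module.finrank_fintype_fun_eq_card, add_comm]

end OrthonormalFrame

section Quaternion

variable {E : Type*} [AddCommGroup E] [Module ℝ E] {B : LinearMap.BilinForm ℝ E}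
  {φ i j k : E →ₗ[ℝ] E}

theorem IsSkewAdj.bilin_apply_right (hφ : IsSkewAdj B φ) (u v : E) : B u (φ v) = -B (φ u) v := by
  rw [hφ, neg_neg]

theorem IsSkewAdj.bilin_self_eq_zero (hφ : IsSkewAdj B φ) (hsymm : ∀ x y : E, B x y = B y x)
    (u : E) : B (φ u) u = 0 := by
  have h := hφ u u
  rw [hsymm u] at h
  linarith

def quatFrame (i j k : E →ₗ[ℝ] E) (x : E) : Fin 4 → E := ![x, i x, j x, k x]

theorem IsQuatStruct.quatFrame_orthonormal (hquat : IsQuatStruct B i j k)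
    (hsymm : ∀ x y : E, B x y = B y x) {x : E} (hx : B x x = 1) (s t : Fin 4) :
    B (quatFrame i j k x s) (quatFrame i j k x t) = if s = t then 1 else 0 := by
  obtain ⟨hi, hj, hk, hii, hjj, hkk, hij, hji, hjk, hkj, hki, hik⟩ := hquat
  fin_cases s <;> fin_cases t <;>
    simp [quatFrame, hi.bilin_apply_right, hj.bilin_apply_right, hk.bilin_apply_right,
      hi.bilin_self_eq_zero hsymm, hj.bilin_self_eq_zero hsymm, hk.bilin_self_eq_zero hsymm, hx,
      hii, hjj, hkk, hij, hji, hjk, hkj, hki, hik]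

theorem IsQuatStruct.apply_curvature_eq_frame (hquat : IsQuatStruct B i j k)
    (hsymm : ∀ x y : E, B x y = B y x) (hpos : ∀ x : E, x ≠ 0 → 0 < B x x) {x : E}
    (hx : B x x = 1) {c₀ c₁ c₂ c₃ a₀ a₁ a₂ : ℝ} {A : E →ₗ[ℝ] E}
    (hA : ∀ z w : E, B (A z) w =
      c₀ * Rs B LinearMap.id x (i x) z w + c₁ * Ra B i x (i x) z w +
        c₂ * Ra B j x (i x) z w + c₃ * Ra B k x (i x) z w)
    (h₀ : 2 * c₁ = a₀) (h₁ : c₀ + c₁ = a₁ - a₀) (h₂ : c₂ + c₃ = a₀ - a₂) (z : E) :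
    i (A z) = a₀ • z +
      ∑ t, (![a₁, a₁, a₂, a₂] t - a₀) • B (quatFrame i j k x t) z • quatFrame i j k x t := by
  obtain ⟨hi, hj, hk, hii, hjj, hkk, hij, hji, hjk, hkj, hki, hik⟩ := hquat
  refine eq_of_forall_bilin_eq hpos fun w => ?_
  rw [hi, hA]
  obtain rfl : a₀ = 2 * c₁ := h₀.symm
  obtain rfl : a₁ = c₀ + 3 * c₁ := by linarith
  obtain rfl : a₂ = 2 * c₁ - c₂ - c₃ := by linarith
  simp only [Rs, Ra, LinearMap.id_coe, id_eq, hi.bilin_apply_right, hii, hji, hij, hik, hki,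
    hj.bilin_self_eq_zero hsymm, hk.bilin_self_eq_zero hsymm, hx, map_neg, LinearMap.neg_apply,
    neg_neg, neg_zero, mul_neg, neg_mul, mul_one, mul_zero, zero_mul, sub_zero, quatFrame,
    Fin.sum_univ_four, Fin.isValue, Matrix.cons_val_zero, Matrix.cons_val_one, Matrix.cons_val,
    map_add, map_smul, LinearMap.add_apply, LinearMap.smul_apply, smul_eq_mul]
  ring

theorem IsQuatStruct.commute_of_frame (hquat : IsQuatStruct B i j k) {x : E} {T : E →ₗ[ℝ] E}
    {a₀ a₁ a₂ : ℝ} (hT : ∀ z, T z = a₀ • z +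
      ∑ t, (![a₁, a₁, a₂, a₂] t - a₀) • B (quatFrame i j k x t) z • quatFrame i j k x t)
    (v : E) : i (T v) = T (i v) := by
  obtain ⟨hi, -, -, hii, -, -, hij, -, -, -, -, hik⟩ := hquat
  rw [hT, hT]
  simp only [quatFrame, Fin.sum_univ_four, Fin.isValue, Matrix.cons_val_zero,
    Matrix.cons_val_one, Matrix.cons_val, map_add, map_smul, map_neg, hii, hij, hik,
    hi.bilin_apply_right, LinearMap.neg_apply, smul_neg, neg_smul, neg_neg]
  match_scalars <;> ring

end Quaternion

theorem eigenvalues_quaternion_three_general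
    (B : LinearMap.BilinForm ℝ V)
    (hsymm : ∀ x y : V, B x y = B y x)
    (hpos : ∀ x : V, x ≠ 0 → 0 < B x x)
    (s : ℕ) (hdim : finrank ℝ V = 4 * s)
    (i j k : V →ₗ[ℝ] V) (hquat : IsQuatStruct B i j k)
    (a₀ a₁ a₂ : ℝ) (h01 : a₀ ≠ a₁) (h02 : a₀ ≠ a₂) (h12 : a₁ ≠ a₂) :
    ∃ c₀ c₁ c₂ c₃ : ℝ, ∀ x : V, B x x = 1 →
      ∀ A : V →ₗ[ℝ] V,
        (∀ z w : V, B (A z) w =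
          c₀ * Rs B LinearMap.id x (i x) z w + c₁ * Ra B i x (i x) z w +
            c₂ * Ra B j x (i x) z w + c₃ * Ra B k x (i x) z w) →
        (∀ v : V, i ((i ∘ₗ A) v) = (i ∘ₗ A) (i v)) ∧
        (∀ z w : V, B ((i ∘ₗ A) z) w = B z ((i ∘ₗ A) w)) ∧
        finrank ℝ (Module.End.eigenspace (i ∘ₗ A) a₀) = 2 * (2 * s - 2) ∧
        finrank ℝ (Module.End.eigenspace (i ∘ₗ A) a₁) = 2 ∧
        finrank ℝ (Module.End.eigenspace (i ∘ₗ A) a₂) = 2 ∧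
        (∀ c : ℝ, c ≠ a₀ → c ≠ a₁ → c ≠ a₂ →
          Module.End.eigenspace (i ∘ₗ A) c = ⊥) := by
  refine ⟨a₁ - 3 * a₀ / 2, a₀ / 2, a₀ - a₂, 0, fun x hx A hA => ?_⟩
  have he := hquat.quatFrame_orthonormal hsymm hx
  have hT : ∀ z, (i ∘ₗ A) z = a₀ • z +
      ∑ t, (![a₁, a₁, a₂, a₂] t - a₀) • B (quatFrame i j k x t) z • quatFrame i j k x t :=
    hquat.apply_curvature_eq_frame hsymm hpos hx hA (by ring) (by ring) (by ring)
  have hμ₀ : ∀ t, ![a₁, a₁, a₂, a₂] t ≠ a₀ := fun t => by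
    fin_cases t <;> simp [h01.symm, h02.symm]
  refine ⟨hquat.commute_of_frame hT, isSelfAdj_of_frame hT hsymm, ?_, ?_, ?_, ?_⟩
  · have := finrank_eigenspace_add_card hT he hμ₀
    simp only [Fintype.card_fin, hdim] at this
    omega
  · rw [finrank_eigenspace_of_frame hT he h01.symm, Fintype.card_subtype, Finset.card_filter,
      Fin.sum_univ_four]
    simp [h12.symm]
  · rw [finrank_eigenspace_of_frame hT he h02.symm, Fintype.card_subtype, Finset.card_filter,
      Fin.sum_univ_four]
    simp [h12]
  · intro c hc₀ hc₁ hc₂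
    refine eigenspace_eq_bot_of_frame hT he hc₀ fun t => ?_
    fin_cases t <;> simp [hc₁.symm, hc₂.symm]

/-- On a positive definite space of dimension `4s` (`s ≥ 2`) with a
skew-adjoint quaternion structure `{i, j, k}` and `J = i`, for any pairwise distinct
reals `a₀, a₁, a₂` one can choose `c₀, c₁, c₂, c₃` so that for
`R = c₀ R_Id + c₁ R_i + c₂ R_j + c₃ R_k` and every unit `x`, the operator
`T = J ∘ R(x, Jx)` commutes with `J`, is self-adjoint, and (as a complex-linear
operator on `(V, J) ≅ ℂ^{2s}`) has exactly the eigenvalues `a₀` with multiplicity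
`2s - 2`, `a₁` with multiplicity `1`, and `a₂` with multiplicity `1` (complex
multiplicity `μ` corresponds to real eigenspace dimension `2μ`). -/
theorem eigenvalues_quaternion_three
    (B : LinearMap.BilinForm ℝ V)
    (hsymm : ∀ x y : V, B x y = B y x)
    (hpos : ∀ x : V, x ≠ 0 → 0 < B x x)
    (s : ℕ) (hs : 2 ≤ s) (hdim : finrank ℝ V = 4 * s)
    (i j k : V →ₗ[ℝ] V) (hquat : IsQuatStruct B i j k)
    (a₀ a₁ a₂ : ℝ) (h01 : a₀ ≠ a₁) (h02 : a₀ ≠ a₂) (h12 : a₁ ≠ a₂) :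
    ∃ c₀ c₁ c₂ c₃ : ℝ, ∀ x : V, B x x = 1 →
      ∀ A : V →ₗ[ℝ] V,
        (∀ z w : V, B (A z) w =
          c₀ * Rs B LinearMap.id x (i x) z w + c₁ * Ra B i x (i x) z w +
            c₂ * Ra B j x (i x) z w + c₃ * Ra B k x (i x) z w) →
        (∀ v : V, i ((i ∘ₗ A) v) = (i ∘ₗ A) (i v)) ∧
        (∀ z w : V, B ((i ∘ₗ A) z) w = B z ((i ∘ₗ A) w)) ∧
        finrank ℝ (Module.End.eigenspace (i ∘ₗ A) a₀) = 2 * (2 * s - 2) ∧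
        finrank ℝ (Module.End.eigenspace (i ∘ₗ A) a₁) = 2 ∧
        finrank ℝ (Module.End.eigenspace (i ∘ₗ A) a₂) = 2 ∧
        (∀ c : ℝ, c ≠ a₀ → c ≠ a₁ → c ≠ a₂ →
          Module.End.eigenspace (i ∘ₗ A) c = ⊥) :=
  eigenvalues_quaternion_three_general B hsymm hpos s hdim i j k hquat a₀ a₁ a₂ h01 h02 h12
end
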